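/- arXiv:1605.08191 — 3 statements merged into one kernel-verified Lean document; each statement's English description precedes it below -/
import Mathlib

section
/- Fix w ∈ ℝ and V_c > 0, and suppose ρ_c, ρ* ∈ [R_f',∞) satisfy ρ_c ≤ ρ*, p(ρ_c) = w − V_c and p(ρ*) = w. Let Q_0 satisfy 0 < Q_0 ≤ ρ_c·V_c. Then there exists a unique ρ̂ ∈ [ρ_c, ρ*] such that ρ̂·(w − p(ρ̂)) = Q_0 and ρ·(w − p(ρ)) < Q_0 for all ρ ∈ (ρ̂, ρ*]. (This is the congested state û on the 1-Lax curve through w with prescribed flow Q_0 used in the definition of the constrained Riemann solvers.) -/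
open Set

/- The witness is the largest solution of `f x = c` in `[a, b]`; if `f y ≥ c` for some `y` to its
right, the intermediate value theorem on `[y, b]` would produce a larger one. -/
theorem existsUnique_eq_forall_Ioc_lt {f : ℝ → ℝ} {a b c : ℝ} (hab : a ≤ b)
    (hf : ContinuousOn f (Icc a b)) (hfb : f b ≤ c) (hfa : c ≤ f a) :
    ∃! x, x ∈ Icc a b ∧ f x = c ∧ ∀ y ∈ Ioc x b, f y < c := by
  have hT : IsCompact (Icc a b ∩ f ⁻¹' {c}) :=
    isCompact_Icc.of_isClosed_subset
      (hf.preimage_isClosed_of_isClosed isClosed_Icc isClosed_singleton) inter_subset_left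
  obtain ⟨x₀, hx₀, hfx₀⟩ := intermediate_value_Icc' hab hf ⟨hfb, hfa⟩
  obtain ⟨x, ⟨hx, hfx⟩, hmax⟩ := hT.exists_isGreatest ⟨x₀, hx₀, hfx₀⟩
  have hbelow : ∀ y ∈ Ioc x b, f y < c := by
    intro y hy
    by_contra! hcy
    have hfy : ContinuousOn f (Icc y b) :=
      hf.mono (Icc_subset_Icc (hx.1.trans hy.1.le) le_rfl)
    obtain ⟨z, hz, hfz⟩ := intermediate_value_Icc' hy.2 hfy ⟨hfb, hcy⟩
    have hzx : z ≤ x := hmax ⟨⟨hx.1.trans (hy.1.le.trans hz.1), hz.2⟩, hfz⟩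
    linarith [hy.1, hz.1]
  refine ⟨x, ⟨hx, hfx, hbelow⟩, ?_⟩
  rintro x' ⟨hx', hfx', hbelow'⟩
  rcases lt_trichotomy x' x with h | rfl | h
  · exact absurd hfx (hbelow' x ⟨h, hx.2⟩).ne
  · rfl
  · exact absurd hfx' (hbelow x' ⟨h, hx'.2⟩).ne

theorem statement_9_general
    (p : ℝ → ℝ) (hp : ContDiff ℝ 2 p)
    (w Vc ρc ρstar Q₀ : ℝ) (hle : ρc ≤ ρstar)
    (hpc : p ρc = w - Vc) (hps : p ρstar = w)
    (hQpos : 0 < Q₀) (hQle : Q₀ ≤ ρc * Vc) :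
    ∃! ρhat, ρhat ∈ Set.Icc ρc ρstar ∧ ρhat * (w - p ρhat) = Q₀ ∧
      ∀ ρ ∈ Set.Ioc ρhat ρstar, ρ * (w - p ρ) < Q₀ := by
  refine existsUnique_eq_forall_Ioc_lt hle ?_ ?_ ?_
  · exact (continuous_id.mul (continuous_const.sub hp.continuous)).continuousOn
  · simpa [hps] using hQpos.le
  · simpa [hpc] using hQle

/-- There exists a unique ρ̂ ∈ [ρ_c, ρ*] with ρ̂·(w − p(ρ̂)) = Q_0 and
ρ·(w − p(ρ)) < Q_0 for all ρ ∈ (ρ̂, ρ*]. -/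
theorem statement_9
    (Rf' : ℝ) (hRf : 0 < Rf')
    (p : ℝ → ℝ) (hp : ContDiff ℝ 2 p)
    (H2 : ∀ ρ ∈ Set.Ici Rf',
      0 < deriv p ρ ∧ 0 < 2 * deriv p ρ + ρ * deriv (deriv p) ρ)
    (w Vc ρc ρstar Q₀ : ℝ) (hVc : 0 < Vc)
    (hρc : ρc ∈ Set.Ici Rf') (hρstar : ρstar ∈ Set.Ici Rf') (hle : ρc ≤ ρstar)
    (hpc : p ρc = w - Vc) (hps : p ρstar = w)
    (hQpos : 0 < Q₀) (hQle : Q₀ ≤ ρc * Vc) :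
    ∃! ρhat, ρhat ∈ Set.Icc ρc ρstar ∧ ρhat * (w - p ρhat) = Q₀ ∧
      ∀ ρ ∈ Set.Ioc ρhat ρstar, ρ * (w - p ρ) < Q₀ :=
  statement_9_general p hp w Vc ρc ρstar Q₀ hle hpc hps hQpos hQle
end

section
/- The flow along the free-phase branch parametrized by the Riemann invariant, w ↦ Q(u_f(w)) = ρ_f(w)·V(ρ_f(w)), is strictly increasing on [W_c, W_max], and its maximum value is Q(u_f(W_max)) = q_max. -/
/-! The Riemann invariant `V + p` is strictly increasing on `[R_f', R_f'']` (by `H3`), so the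
branch `ρ_f` inverting it is strictly increasing; the flow `ρ ↦ ρ V(ρ)` is strictly increasing
(by `H1`), and the composite is too. At `W_max` the inverse returns `R_f''`. -/

open Set

theorem StrictMonoOn.strictMonoOn_of_rightInvOn {α β : Type*} [LinearOrder α] [Preorder β]
    {f : α → β} {r : β → α} {s : Set α} {t : Set β} (hf : StrictMonoOn f s)
    (hr : ∀ w ∈ t, r w ∈ s ∧ f (r w) = w) : StrictMonoOn r t := by
  intro w₁ hw₁ w₂ hw₂ hlt
  obtain ⟨hr₁, hfr₁⟩ := hr w₁ hw₁
  obtain ⟨hr₂, hfr₂⟩ := hr w₂ hw₂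
  rw [← hf.lt_iff_lt hr₁ hr₂, hfr₁, hfr₂]
  exact hlt

section

variable {D : Set ℝ} (hD : Convex ℝ D)
include hD

theorem strictMonoOn_add_of_deriv_add_pos {V p : ℝ → ℝ} (hV : Differentiable ℝ V)
    (hp : Differentiable ℝ p) (h : ∀ ρ ∈ interior D, 0 < deriv V ρ + deriv p ρ) :
    StrictMonoOn (fun ρ => V ρ + p ρ) D := by
  refine strictMonoOn_of_deriv_pos hD (hV.add hp).continuous.continuousOn fun ρ hρ => ?_
  rw [deriv_fun_add (hV ρ) (hp ρ)]
  exact h ρ hρ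

theorem strictMonoOn_id_mul_of_pos {V : ℝ → ℝ} (hV : Differentiable ℝ V)
    (h : ∀ ρ ∈ interior D, 0 < V ρ + ρ * deriv V ρ) :
    StrictMonoOn (fun ρ => ρ * V ρ) D := by
  refine strictMonoOn_of_deriv_pos hD (continuous_id.mul hV.continuous).continuousOn
    fun ρ hρ => ?_
  have hderiv : HasDerivAt (fun ρ => ρ * V ρ) (1 * V ρ + ρ * deriv V ρ) ρ :=
    (hasDerivAt_id ρ).mul (hV ρ).hasDerivAt
  rw [hderiv.deriv, one_mul]
  exact h ρ hρ

end

theorem statement_16_general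
    (Rf' Rf'' : ℝ) (hRf : 0 < Rf') (hRff : Rf' < Rf'')
    (V p : ℝ → ℝ) (hV : ContDiff ℝ 2 V) (hp : ContDiff ℝ 2 p)
    (H1 : ∀ ρ ∈ Set.Icc (0:ℝ) Rf'',
      deriv V ρ ≤ 0 ∧ 0 < V ρ + ρ * deriv V ρ ∧
      2 * deriv V ρ + ρ * deriv (deriv V) ρ ≤ 0)
    (H3 : ∀ ρ ∈ Set.Icc Rf' Rf'',
      0 < deriv V ρ + deriv p ρ ∧ V ρ < ρ * deriv p ρ)
    (ρf : ℝ → ℝ)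
    (hρf : ∀ w ∈ Set.Icc (p Rf' + V Rf') (p Rf'' + V Rf''),
      ρf w ∈ Set.Icc Rf' Rf'' ∧ V (ρf w) + p (ρf w) = w) :
    StrictMonoOn (fun w => ρf w * V (ρf w))
      (Set.Icc (p Rf' + V Rf') (p Rf'' + V Rf'')) ∧
    (∀ w ∈ Set.Icc (p Rf' + V Rf') (p Rf'' + V Rf''),
      ρf w * V (ρf w) ≤ ρf (p Rf'' + V Rf'') * V (ρf (p Rf'' + V Rf''))) ∧
    ρf (p Rf'' + V Rf'') * V (ρf (p Rf'' + V Rf'')) = Rf'' * V Rf'' := by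
  have hVd : Differentiable ℝ V := hV.differentiable (by norm_num)
  have hpd : Differentiable ℝ p := hp.differentiable (by norm_num)
  have hinv : StrictMonoOn (fun ρ => V ρ + p ρ) (Icc Rf' Rf'') :=
    strictMonoOn_add_of_deriv_add_pos (convex_Icc _ _) hVd hpd fun ρ hρ =>
      (H3 ρ (interior_subset hρ)).1
  have hflow : StrictMonoOn (fun ρ => ρ * V ρ) (Icc 0 Rf'') :=
    strictMonoOn_id_mul_of_pos (convex_Icc _ _) hVd fun ρ hρ =>
      (H1 ρ (interior_subset hρ)).2.1
  have hρf_mono : StrictMonoOn ρf (Icc (p Rf' + V Rf') (p Rf'' + V Rf'')) :=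
    hinv.strictMonoOn_of_rightInvOn hρf
  have hmono : StrictMonoOn (fun w => ρf w * V (ρf w))
      (Icc (p Rf' + V Rf') (p Rf'' + V Rf'')) :=
    hflow.comp hρf_mono fun w hw => Icc_subset_Icc_left hRf.le (hρf w hw).1
  have hRff_mem : Rf'' ∈ Icc Rf' Rf'' := right_mem_Icc.2 hRff.le
  have hWmax_mem : p Rf'' + V Rf'' ∈ Icc (p Rf' + V Rf') (p Rf'' + V Rf'') := by
    refine right_mem_Icc.2 ?_
    linarith [hinv (left_mem_Icc.2 hRff.le) hRff_mem hRff]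
  obtain ⟨hρmax_mem, hρmax⟩ := hρf _ hWmax_mem
  have hρf_Wmax : ρf (p Rf'' + V Rf'') = Rf'' :=
    hinv.injOn hρmax_mem hRff_mem (by linarith)
  exact ⟨hmono, fun w hw => hmono.monotoneOn hw hWmax_mem hw.2, by rw [hρf_Wmax]⟩

/-- The flow along the free-phase branch parametrized by the Riemann invariant,
w ↦ Q(u_f(w)) = ρ_f(w)·V(ρ_f(w)), is strictly increasing on [W_c, W_max], and
its maximum value is Q(u_f(W_max)) = q_max. -/
theorem statement_16
    (Rf' Rf'' : ℝ) (hRf : 0 < Rf') (hRff : Rf' < Rf'')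
    (V p : ℝ → ℝ) (hV : ContDiff ℝ 2 V) (hp : ContDiff ℝ 2 p)
    (hVnn : ∀ ρ ∈ Set.Icc (0:ℝ) Rf'', 0 ≤ V ρ) (hVpos : 0 < V Rf'')
    (H1 : ∀ ρ ∈ Set.Icc (0:ℝ) Rf'',
      deriv V ρ ≤ 0 ∧ 0 < V ρ + ρ * deriv V ρ ∧
      2 * deriv V ρ + ρ * deriv (deriv V) ρ ≤ 0)
    (H2 : ∀ ρ ∈ Set.Ici Rf',
      0 < deriv p ρ ∧ 0 < 2 * deriv p ρ + ρ * deriv (deriv p) ρ)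
    (H3 : ∀ ρ ∈ Set.Icc Rf' Rf'',
      0 < deriv V ρ + deriv p ρ ∧ V ρ < ρ * deriv p ρ)
    (ρf : ℝ → ℝ)
    (hρf : ∀ w ∈ Set.Icc (p Rf' + V Rf') (p Rf'' + V Rf''),
      ρf w ∈ Set.Icc Rf' Rf'' ∧ V (ρf w) + p (ρf w) = w) :
    StrictMonoOn (fun w => ρf w * V (ρf w))
      (Set.Icc (p Rf' + V Rf') (p Rf'' + V Rf'')) ∧
    (∀ w ∈ Set.Icc (p Rf' + V Rf') (p Rf'' + V Rf''),
      ρf w * V (ρf w) ≤ ρf (p Rf'' + V Rf'') * V (ρf (p Rf'' + V Rf''))) ∧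
    ρf (p Rf'' + V Rf'') * V (ρf (p Rf'' + V Rf'')) = Rf'' * V Rf'' :=
  statement_16_general Rf' Rf'' hRf hRff V p hV hp H1 H3 ρf hρf
end

section
/- Let v_max, R, v_ref, ρ_max > 0 and 0 < R_f' < R_f'', and define V(ρ) = v_max·(1 − ρ/R) and p(ρ) = v_ref·log(ρ/ρ_max). Then hypothesis (H3) — that is, V'(ρ) + p'(ρ) > 0 and V(ρ) < ρ·p'(ρ) for all ρ ∈ [R_f', R_f''] — holds if and only if v_ref·R > v_max·R_f'' and v_max·(1 − R_f'/R) < v_ref. -/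
/-! Here V' = -v_max/R and p' = v_ref/ρ, so (H3) at ρ says v_max·ρ < v_ref·R and V(ρ) < v_ref.
The left side of the first condition increases and that of the second decreases in ρ, so on
[R_f', R_f''] they are decided at R_f'' and at R_f' respectively. -/

open Set

theorem forall_mem_Icc_lt_and_lt_iff {α β : Type*} [Preorder α] [Preorder β]
    {f g : α → β} {a b : α} {c d : β} (hab : a ≤ b)
    (hf : MonotoneOn f (Icc a b)) (hg : AntitoneOn g (Icc a b)) :
    (∀ x ∈ Icc a b, f x < c ∧ g x < d) ↔ f b < c ∧ g a < d := by
  refine ⟨fun h => ⟨(h b (right_mem_Icc.2 hab)).1, (h a (left_mem_Icc.2 hab)).2⟩, ?_⟩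
  rintro ⟨hfb, hga⟩ x hx
  exact ⟨(hf hx (right_mem_Icc.2 hab) hx.2).trans_lt hfb,
    (hg (left_mem_Icc.2 hab) hx hx.1).trans_lt hga⟩

theorem deriv_const_mul_one_sub_div (a b x : ℝ) :
    deriv (fun r => a * (1 - r / b)) x = -a / b := by
  rw [((((hasDerivAt_id' x).div_const b).const_sub 1).const_mul a).deriv]
  ring

theorem deriv_const_mul_log_div {x c : ℝ} (a : ℝ) (hx : x ≠ 0) (hc : c ≠ 0) :
    deriv (fun r => a * Real.log (r / c)) x = a / x := by
  rw [((((hasDerivAt_id' x).div_const c).log (div_ne_zero hx hc)).const_mul a).deriv]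
  field_simp

theorem h3_at_iff {vmax R vref ρmax ρ : ℝ} (hR : 0 < R) (hρmax : ρmax ≠ 0) (hρ : 0 < ρ) :
    (0 < deriv (fun r => vmax * (1 - r / R)) ρ +
          deriv (fun r => vref * Real.log (r / ρmax)) ρ ∧
      vmax * (1 - ρ / R) < ρ * deriv (fun r => vref * Real.log (r / ρmax)) ρ) ↔
    (vmax * ρ < vref * R ∧ vmax * (1 - ρ / R) < vref) := by
  rw [deriv_const_mul_one_sub_div, deriv_const_mul_log_div vref hρ.ne' hρmax,
    mul_div_cancel₀ vref hρ.ne', neg_div, neg_add_eq_sub, sub_pos, div_lt_div_iff₀ hR hρ]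

theorem statement_19_general (vmax R vref ρmax Rf' Rf'' : ℝ)
    (hvmax : 0 < vmax) (hR : 0 < R) (hρmax : 0 < ρmax)
    (hRf : 0 < Rf') (hRff : Rf' < Rf'') :
    (∀ ρ ∈ Set.Icc Rf' Rf'',
      0 < deriv (fun r => vmax * (1 - r / R)) ρ +
            deriv (fun r => vref * Real.log (r / ρmax)) ρ ∧
      vmax * (1 - ρ / R) < ρ * deriv (fun r => vref * Real.log (r / ρmax)) ρ)
    ↔ (vref * R > vmax * Rf'' ∧ vmax * (1 - Rf' / R) < vref) := by
  have hpointwise : ∀ ρ ∈ Icc Rf' Rf'', _ ↔ _ := fun ρ hρ =>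
    h3_at_iff (vmax := vmax) (vref := vref) hR hρmax.ne' (hRf.trans_le hρ.1)
  rw [forall₂_congr hpointwise]
  refine forall_mem_Icc_lt_and_lt_iff hRff.le ?_ ?_
  · exact fun x _ y _ hxy => mul_le_mul_of_nonneg_left hxy hvmax.le
  · exact fun x _ y _ hxy => mul_le_mul_of_nonneg_left
      (sub_le_sub_left (div_le_div_of_nonneg_right hxy hR.le) 1) hvmax.le

/-- For V(ρ) = v_max·(1 − ρ/R) and p(ρ) = v_ref·log(ρ/ρ_max), hypothesis (H3)
on [R_f', R_f''] holds if and only if v_ref·R > v_max·R_f'' and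
v_max·(1 − R_f'/R) < v_ref. -/
theorem statement_19 (vmax R vref ρmax Rf' Rf'' : ℝ)
    (hvmax : 0 < vmax) (hR : 0 < R) (hvref : 0 < vref) (hρmax : 0 < ρmax)
    (hRf : 0 < Rf') (hRff : Rf' < Rf'') :
    (∀ ρ ∈ Set.Icc Rf' Rf'',
      0 < deriv (fun r => vmax * (1 - r / R)) ρ +
            deriv (fun r => vref * Real.log (r / ρmax)) ρ ∧
      vmax * (1 - ρ / R) < ρ * deriv (fun r => vref * Real.log (r / ρmax)) ρ)
    ↔ (vref * R > vmax * Rf'' ∧ vmax * (1 - Rf' / R) < vref) :=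
  statement_19_general vmax R vref ρmax Rf' Rf'' hvmax hR hρmax hRf hRff
end
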